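/- arXiv:1101.2957 — 10 statements merged into one kernel-verified Lean document; each statement's English description precedes it below -/
import Mathlib

section
/- Let V be a finite set, r ∈ V, and ⪯ a partial order on V such that (i) r ⪯ w for all w ∈ V, and (ii) for all u,v,w ∈ V, if u ⪯ w and v ⪯ w then u ⪯ v or v ⪯ u. Then there exists a tree T with vertex set V such that for all u,x ∈ V, u ⪯ x if and only if u lies on the unique path in T from r to x. -/
/-!
The tree is the Hasse diagram of the order. Since the elements below any `x` form a chain, every
`x ≠ r` covers exactly one element. Descending along these covers from `x` gives a path from `r`
to `x` whose vertices are exactly the elements below `x`, so the diagram is connected. It is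
acyclic because a vertex of a cycle that is maximal among the vertices of the cycle would cover
both of its neighbours on the cycle, which therefore coincide.
-/

/-- `y` lies on the (unique) path in the graph `G` joining `x` and `z`. -/
def OnPath {V : Type*} (G : SimpleGraph V) (x y z : V) : Prop :=
  ∃ p : G.Walk x z, p.IsPath ∧ y ∈ p.support

section ChainBelow

variable {α : Type*} [PartialOrder α]
  (hchain : ∀ ⦃u v w : α⦄, u ≤ w → v ≤ w → u ≤ v ∨ v ≤ u)
include hchain

lemma CovBy.le_of_lt_of_chain {u p x : α} (hpx : p ⋖ x) (hux : u < x) : u ≤ p := by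
  rcases hchain hux.le hpx.le with hup | hpu
  · exact hup
  · rcases hpu.eq_or_lt with rfl | hpu
    · exact le_rfl
    · exact (hpx.2 hpu hux).elim

lemma CovBy.eq_of_covBy_of_chain {p q x : α} (hp : p ⋖ x) (hq : q ⋖ x) : p = q :=
  le_antisymm (hq.le_of_lt_of_chain hchain hp.lt) (hp.le_of_lt_of_chain hchain hq.lt)

namespace SimpleGraph

lemma hasse_isAcyclic [Finite α] : (hasse α).IsAcyclic := by
  classical
  intro v c hc
  obtain ⟨m, hm⟩ := c.support.toFinset.exists_maximal ⟨v, by simp⟩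
  have hmc : m ∈ c.support := by simpa using hm.prop
  set c' := c.rotate m hmc
  have hc' : c'.IsCycle := hc.rotate hmc
  have covBy_m {y : α} (hy : y ∈ c'.support) (hadj : (hasse α).Adj m y) : y ⋖ m :=
    hadj.resolve_left fun hmy ↦ hm.not_gt (by simpa [c'] using hy) hmy.lt
  have hsnd := covBy_m (c'.getVert_mem_support 1) (c'.adj_snd hc'.not_nil)
  have hpen := covBy_m (c'.getVert_mem_support _) (c'.adj_penultimate hc'.not_nil).symm
  exact hc'.snd_ne_penultimate (hsnd.eq_of_covBy_of_chain hchain hpen)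

variable [Finite α] [OrderBot α]

lemma exists_isPath_bot_support_iff_le (x : α) :
    ∃ p : (hasse α).Walk ⊥ x, p.IsPath ∧ ∀ u, u ∈ p.support ↔ u ≤ x := by
  induction x using WellFoundedLT.induction with
  | _ x ih =>
  rcases eq_bot_or_bot_lt x with rfl | hx
  · exact ⟨.nil, .nil, fun u ↦ by simp⟩
  obtain ⟨y, -, hyx⟩ := exists_le_covBy_of_lt hx
  obtain ⟨p, hp, hsupp⟩ := ih y hyx.lt
  have hadj : (hasse α).Adj y x := Or.inl hyx
  refine ⟨p.concat hadj, hp.concat (fun h ↦ hyx.lt.not_ge ((hsupp x).1 h)) hadj, fun u ↦ ?_⟩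
  rw [Walk.support_concat, List.mem_append, List.mem_singleton, hsupp]
  refine ⟨?_, fun hux ↦ ?_⟩
  · rintro (huy | rfl)
    exacts [huy.trans hyx.le, le_rfl]
  · rcases hux.eq_or_lt with rfl | hux
    exacts [Or.inr rfl, Or.inl (hyx.le_of_lt_of_chain hchain hux)]

lemma hasse_isTree : (hasse α).IsTree := by
  refine ⟨.mk fun u v ↦ ?_, hasse_isAcyclic hchain⟩
  obtain ⟨p, -⟩ := exists_isPath_bot_support_iff_le hchain u
  obtain ⟨q, -⟩ := exists_isPath_bot_support_iff_le hchain v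
  exact (p.reverse.append q).reachable

lemma onPath_hasse_bot_iff {u x : α} : OnPath (hasse α) ⊥ u x ↔ u ≤ x := by
  obtain ⟨p, hp, hsupp⟩ := exists_isPath_bot_support_iff_le hchain x
  refine ⟨fun ⟨q, hq, huq⟩ ↦ ?_, fun hux ↦ ⟨p, hp, (hsupp u).2 hux⟩⟩
  rw [← hsupp, ((hasse_isTree hchain).existsUnique_path ⊥ x).unique hp hq]
  exact huq

end SimpleGraph

end ChainBelow

theorem stmt_0 {V : Type*} [Fintype V] (r : V) (le : V → V → Prop)
    (hrefl : ∀ a, le a a)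
    (hantisymm : ∀ a b, le a b → le b a → a = b)
    (htrans : ∀ a b c, le a b → le b c → le a c)
    (hmin : ∀ w, le r w)
    (hchain : ∀ u v w, le u w → le v w → le u v ∨ le v u) :
    ∃ T : SimpleGraph V, T.IsTree ∧ ∀ u x, le u x ↔ OnPath T r u x := by
  let : PartialOrder V :=
    { le, le_refl := hrefl, le_trans := htrans, le_antisymm := hantisymm }
  let : OrderBot V := { bot := r, bot_le := hmin }
  exact ⟨SimpleGraph.hasse V, SimpleGraph.hasse_isTree hchain,
    fun _ _ ↦ (SimpleGraph.onPath_hasse_bot_iff hchain).symm⟩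
end

section
/- Let V be a set and (u,v) ↦ [uv] a mapping from V² to subsets of V satisfying (S) for all a,b,c there exists d with [ab] ∩ [bc] = [bd], and (T) for all a,b,c, if [ab] ⊆ [ac] then [ab] ∩ [bc] = {b}. Then [ab] = [ba] for all a,b ∈ V. -/
theorem stmt_3 {V : Type*} (seg : V → V → Set V)
    (hS : ∀ a b c, ∃ d, seg a b ∩ seg b c = seg b d)
    (hT : ∀ a b c, seg a b ⊆ seg a c → seg a b ∩ seg b c = {b}) :
    ∀ a b, seg a b = seg b a := by
  -- right endpoint belongs to the segment
  have hbb : ∀ a b : V, b ∈ seg a b := by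
    intro a b
    have h := hT a b b subset_rfl
    have hb : b ∈ seg a b ∩ seg b b := by rw [h]; exact rfl
    exact hb.1
  -- degenerate segment is a singleton
  have haa : ∀ a : V, seg a a = {a} := by
    intro a
    have h := hT a a a subset_rfl
    rwa [Set.inter_self] at h
  -- left endpoint belongs to the segment
  have hab : ∀ a b : V, a ∈ seg a b := by
    intro a b
    obtain ⟨d, hd⟩ := hS a a b
    have hda : d = a := by
      have h1 : d ∈ seg a a ∩ seg a b := hd ▸ hbb a d
      have h2 := h1.1
      rwa [haa a, Set.mem_singleton_iff] at h2
    rw [hda] at hd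
    have h1 : a ∈ seg a a ∩ seg a b := by rw [hd]; exact hbb a a
    exact h1.2
  -- one inclusion
  have key : ∀ a b : V, seg a b ⊆ seg b a := by
    intro a b
    obtain ⟨d, hd⟩ := hS b a b
    have hsub : seg a d ⊆ seg a b := by
      rw [← hd]; exact Set.inter_subset_right
    have hT' := hT a d b hsub
    have hbmem : b ∈ seg a d ∩ seg d b := by
      refine ⟨?_, hbb d b⟩
      rw [← hd]; exact ⟨hab b a, hbb a b⟩
    have hbd : b = d := by
      rw [hT'] at hbmem; exact hbmem
    subst hbd
    rw [← hd]
    exact Set.inter_subset_left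
  exact fun a b => Set.Subset.antisymm (key a b) (key b a)
end

section
/- Let V be a set and (u,v) ↦ [uv] a mapping from V² to subsets of V satisfying (S) for all a,b,c there exists d with [ab] ∩ [bc] = [bd], and (T) for all a,b,c, if [ab] ⊆ [ac] then [ab] ∩ [bc] = {b}. Then for all a,b,c ∈ V, b ∈ [ac] if and only if [ab] ⊆ [ac]. -/
theorem stmt_4 {V : Type*} (seg : V → V → Set V)
    (hS : ∀ a b c, ∃ d, seg a b ∩ seg b c = seg b d)
    (hT : ∀ a b c, seg a b ⊆ seg a c → seg a b ∩ seg b c = {b}) :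
    ∀ a b c, b ∈ seg a c ↔ seg a b ⊆ seg a c := by
  -- The second endpoint lies in every segment.
  have F1 : ∀ x y, y ∈ seg x y := by
    intro x y
    have h := hT x y y (subset_refl _)
    have hy : y ∈ seg x y ∩ seg y y := by rw [h]; rfl
    exact hy.1
  -- Degenerate segments are singletons.
  have F4 : ∀ x, seg x x = {x} := by
    intro x
    have h := hT x x x (subset_refl _)
    rwa [Set.inter_self] at h
  -- The first endpoint lies in every segment.
  have F5 : ∀ x y, x ∈ seg x y := by
    intro x y
    obtain ⟨d, hd⟩ := hS x x y
    rw [F4 x] at hd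
    have hdmem : d ∈ ({x} : Set V) ∩ seg x y := by rw [hd]; exact F1 x d
    have hdx : d = x := hdmem.1
    exact hdx ▸ hdmem.2
  -- Key lemma.
  have M : ∀ a b c, b ∈ seg c a → seg a b ⊆ seg c a := by
    intro a b c hb
    obtain ⟨g, hg⟩ := hS c a b
    have hsub : seg a g ⊆ seg a b := by rw [← hg]; exact Set.inter_subset_right
    have ht := hT a g b hsub
    have hbg : b ∈ seg a g := by rw [← hg]; exact ⟨hb, F1 a b⟩
    have hbmem : b ∈ ({g} : Set V) := by rw [← ht]; exact ⟨hbg, F1 g b⟩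
    have hgb : g = b := (Set.mem_singleton_iff.mp hbmem).symm
    rw [hgb] at hg
    intro x hx
    have : x ∈ seg c a ∩ seg a b := by rw [hg]; exact hx
    exact this.1
  -- Symmetry of segments.
  have sym : ∀ a c, seg a c ⊆ seg c a := fun a c => M a c c (F5 c a)
  intro a b c
  constructor
  · intro hb
    intro x hx
    exact sym c a (M a b c (sym a c hb) hx)
  · intro h
    exact h (F1 a b)
end

section
/- Let V be a set and (u,v) ↦ [uv] a mapping from V² to subsets of V satisfying (S) for all a,b,c there exists d with [ab] ∩ [bc] = [bd], and (T) for all a,b,c, if [ab] ⊆ [ac] then [ab] ∩ [bc] = {b}. Then for all a,b,c ∈ V, if b ∈ [ac] and c ∈ [ab] then b = c. -/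
theorem stmt_5 {V : Type*} (seg : V → V → Set V)
    (hS : ∀ a b c, ∃ d, seg a b ∩ seg b c = seg b d)
    (hT : ∀ a b c, seg a b ⊆ seg a c → seg a b ∩ seg b c = {b}) :
    ∀ a b c, b ∈ seg a c → c ∈ seg a b → b = c := by
  -- seg x x = {x}
  have hxx : ∀ x, seg x x = {x} := by
    intro x
    have := hT x x x (subset_refl _)
    rwa [Set.inter_self] at this
  -- y ∈ seg x y
  have hmem2 : ∀ x y, y ∈ seg x y := by
    intro x y
    have h := hT x y y (subset_refl _)
    have : y ∈ seg x y ∩ seg y y := by rw [h]; exact rfl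
    exact this.1
  -- x ∈ seg x y
  have hmem1 : ∀ x y, x ∈ seg x y := by
    intro x y
    obtain ⟨d, hd⟩ := hS x x y
    have hdm : d ∈ seg x d := hmem2 x d
    have : d ∈ seg x x ∩ seg x y := by rw [hd]; exact hdm
    have hdx : d = x := by
      have := this.1; rw [hxx] at this; exact this
    have hx : x ∈ seg x x ∩ seg x y := by
      rw [hd, hdx]; rw [hxx]; exact rfl
    exact hx.2
  -- seg b a ⊆ seg a b
  have hsym : ∀ a b, seg b a ⊆ seg a b := by
    intro a b
    obtain ⟨p, hp⟩ := hS a b a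
    have hap : a ∈ seg b p := by
      rw [← hp]; exact ⟨hmem1 a b, hmem2 b a⟩
    have hsub : seg b p ⊆ seg b a := by
      rw [← hp]; exact Set.inter_subset_right
    have hTp := hT b p a hsub
    have : a ∈ ({p} : Set V) := by
      rw [← hTp]; exact ⟨hap, hmem2 p a⟩
    have hpa : p = a := this.symm
    have : seg b a = seg a b ∩ seg b a := by rw [hp, hpa]
    intro x hx
    have := this ▸ hx
    exact this.1
  intro a b c hb hc
  obtain ⟨n, hn⟩ := hS b a c
  have hbn : b ∈ seg a n := by rw [← hn]; exact ⟨hmem1 b a, hb⟩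
  have hcn : c ∈ seg a n := by rw [← hn]; exact ⟨hsym b a hc, hmem2 a c⟩
  have hsub1 : seg a n ⊆ seg a b := by
    rw [← hn]; exact fun x hx => hsym a b hx.1
  have hsub2 : seg a n ⊆ seg a c := by
    rw [← hn]; exact Set.inter_subset_right
  have hb' : b ∈ ({n} : Set V) := by
    rw [← hT a n b hsub1]; exact ⟨hbn, hmem2 n b⟩
  have hc' : c ∈ ({n} : Set V) := by
    rw [← hT a n c hsub2]; exact ⟨hcn, hmem2 n c⟩
  rw [hb', hc']
end

section
/- Let V be a set and (u,v) ↦ [uv] a mapping from V² to subsets of V satisfying (S) for all a,b,c there exists d with [ab] ∩ [bc] = [bd], and (T) for all a,b,c, if [ab] ⊆ [ac] then [ab] ∩ [bc] = {b}. Then for all a,b,c,d ∈ V, if [ab] ∩ [bc] = [bd] then [ad] ∩ [dc] = {d}. -/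
theorem stmt_6 {V : Type*} (seg : V → V → Set V)
    (hS : ∀ a b c, ∃ d, seg a b ∩ seg b c = seg b d)
    (hT : ∀ a b c, seg a b ⊆ seg a c → seg a b ∩ seg b c = {b}) :
    ∀ a b c d, seg a b ∩ seg b c = seg b d → seg a d ∩ seg d c = {d} := by
  -- L1 : second endpoint belongs to the segment
  have hL1 : ∀ x y : V, y ∈ seg x y := by
    intro x y
    have h := hT x y y (subset_refl _)
    have hy : y ∈ seg x y ∩ seg y y := by
      rw [h]; exact rfl
    exact hy.1
  -- L2 : [xx] = {x}
  have hL2 : ∀ x : V, seg x x = {x} := by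
    intro x
    have h := hT x x x (subset_refl _)
    simpa using h
  -- L3 : first endpoint belongs to the segment
  have hL3 : ∀ x y : V, x ∈ seg x y := by
    intro x y
    obtain ⟨g, hg⟩ := hS x x y
    have hgm : g ∈ seg x x ∩ seg x y := by rw [hg]; exact hL1 x g
    have hgx : g = x := by
      have := hgm.1
      rw [hL2 x] at this
      exact this
    have := hgm.2
    rwa [hgx] at this
  -- L5 : symmetry
  have hL5 : ∀ x y : V, seg x y = seg y x := by
    have key : ∀ u v : V, seg u v ⊆ seg v u := by
      intro u v
      obtain ⟨k, hk⟩ := hS v u v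
      have hsub : seg u k ⊆ seg u v := by
        rw [← hk]; exact Set.inter_subset_right
      have hTk := hT u k v hsub
      have hvk : v ∈ seg u k := by
        rw [← hk]; exact ⟨hL3 v u, hL1 u v⟩
      have hvk2 : v ∈ seg u k ∩ seg k v := ⟨hvk, hL1 k v⟩
      rw [hTk] at hvk2
      have hveqk : v = k := hvk2
      rw [← hveqk] at hk
      intro z hz
      have : z ∈ seg v u ∩ seg u v := by rw [hk]; exact hz
      exact this.1
    intro x y
    exact subset_antisymm (key x y) (key y x)
  -- L6 : monotonicity : p ∈ [xy] → [yp] ⊆ [xy]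
  have hL6 : ∀ x y p : V, p ∈ seg x y → seg y p ⊆ seg x y := by
    intro x y p hp
    obtain ⟨w, hw⟩ := hS x y p
    have hsub : seg y w ⊆ seg y p := by
      rw [← hw]; exact Set.inter_subset_right
    have hTw := hT y w p hsub
    have hpw : p ∈ seg y w := by rw [← hw]; exact ⟨hp, hL1 y p⟩
    have hpw2 : p ∈ seg y w ∩ seg w p := ⟨hpw, hL1 w p⟩
    rw [hTw] at hpw2
    have hpeqw : p = w := hpw2
    rw [← hpeqw] at hw
    intro z hz
    have : z ∈ seg x y ∩ seg y p := by rw [hw]; exact hz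
    exact this.1
  -- main proof
  intro a b c d h
  have hd : d ∈ seg a b ∩ seg b c := by rw [h]; exact hL1 b d
  have hd_ab : d ∈ seg a b := hd.1
  have hd_bc : d ∈ seg b c := hd.2
  have hbd_bc : seg b d ⊆ seg b c := by
    rw [← h]; exact Set.inter_subset_right
  have P1 : seg b d ∩ seg d c = {d} := hT b d c hbd_bc
  obtain ⟨e, he⟩ := hS a d c
  have hem : e ∈ seg a d ∩ seg d c := by rw [he]; exact hL1 d e
  have he_ad : e ∈ seg a d := hem.1
  have he_dc : e ∈ seg d c := hem.2
  -- e ∈ [ab]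
  have he_ab : e ∈ seg a b := by
    have hd_ba : d ∈ seg b a := by rwa [← hL5] ;
    have : seg a d ⊆ seg b a := hL6 b a d hd_ba
    have := this he_ad
    rwa [hL5 b a] at this
  -- e ∈ [bc]
  have he_bc : e ∈ seg b c := by
    have hsub : seg c d ⊆ seg b c := hL6 b c d hd_bc
    have : e ∈ seg c d := by rwa [hL5 c d]
    exact hsub this
  have he_bd : e ∈ seg b d := by rw [← h]; exact ⟨he_ab, he_bc⟩
  have hed : e ∈ ({d} : Set V) := by
    rw [← P1]; exact ⟨he_bd, he_dc⟩
  have heqd : e = d := hed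
  rw [he, heqd, hL2 d]
end

section
/- Let V be a set and (u,v) ↦ [uv] a mapping from V² to subsets of V satisfying Sholander's axioms (S), (T), (U₁). Then for all a,b,c ∈ V: b ∈ [ac] ⟺ [ab] ∩ [bc] = {b} ⟺ [ab] ∪ [bc] = [ac]. -/
theorem stmt_7 {V : Type*} (seg : V → V → Set V)
    (hS : ∀ a b c, ∃ d, seg a b ∩ seg b c = seg b d)
    (hT : ∀ a b c, seg a b ⊆ seg a c → seg a b ∩ seg b c = {b})
    (hU₁ : ∀ a b c, seg a b ∩ seg b c = {b} → seg a b ∪ seg b c = seg a c) :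
    ∀ a b c, (b ∈ seg a c ↔ seg a b ∩ seg b c = {b}) ∧
      (seg a b ∩ seg b c = {b} ↔ seg a b ∪ seg b c = seg a c) := by
  -- (A) seg a a = {a}
  have hA : ∀ a : V, seg a a = {a} := by
    intro a
    have h := hT a a a (subset_refl _)
    simpa using h
  -- (B) second endpoint: b ∈ seg a b
  have hB : ∀ a b : V, b ∈ seg a b := by
    intro a b
    have h := hT a b b (subset_refl _)
    have hb : b ∈ seg a b ∩ seg b b := by rw [h]; rfl
    exact hb.1
  -- (E) first endpoint: a ∈ seg a b
  have hE : ∀ a b : V, a ∈ seg a b := by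
    intro a b
    obtain ⟨d, hd⟩ := hS a a b
    rw [hA a] at hd
    have hda : d = a := by
      have h := hB a d
      rw [← hd] at h
      exact h.1
    rw [hda, hA a] at hd
    have : a ∈ ({a} : Set V) ∩ seg a b := by rw [hd]; rfl
    exact this.2
  -- symmetry: seg a b = seg b a
  have half : ∀ a b : V, seg b a ⊆ seg a b := by
    intro a b
    obtain ⟨e, he⟩ := hS a b a
    have hsub : seg b e ⊆ seg b a := by
      rw [← he]; exact Set.inter_subset_right
    have hint := hT b e a hsub
    have ha : a ∈ seg b e := by rw [← he]; exact ⟨hE a b, hB b a⟩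
    have hae : a = e := by
      have h : a ∈ seg b e ∩ seg e a := ⟨ha, hB e a⟩
      rw [hint] at h
      exact h
    rw [← hae] at he
    intro x hx
    have h : x ∈ seg a b ∩ seg b a := by rw [he]; exact hx
    exact h.1
  have hsym : ∀ a b : V, seg a b = seg b a :=
    fun a b => Set.Subset.antisymm (half b a) (half a b)
  -- key: b ∈ seg a c → seg a b ∩ seg b c = {b}
  have key : ∀ a b c : V, b ∈ seg a c → seg a b ∩ seg b c = {b} := by
    intro a b c hb
    obtain ⟨f, hf⟩ := hS b a c
    have hbf : b ∈ seg a f := by rw [← hf]; exact ⟨hE b a, hb⟩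
    have hsub : seg a f ⊆ seg a b := by
      intro x hx
      rw [← hf] at hx
      exact (hsym a b) ▸ hx.1
    have hint := hT a f b hsub
    have hbf2 : b ∈ seg a f ∩ seg f b := ⟨hbf, hB f b⟩
    rw [hint] at hbf2
    have hbfeq : b = f := hbf2
    rw [← hbfeq] at hf
    have habac : seg a b ⊆ seg a c := by
      intro x hx
      have h : x ∈ seg b a ∩ seg a c := by
        rw [hf]; exact hx
      exact h.2
    exact hT a b c habac
  intro a b c
  constructor
  · constructor
    · exact key a b c
    · intro h
      have hu := hU₁ a b c h
      rw [← hu]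
      exact Or.inl (hB a b)
  · constructor
    · exact hU₁ a b c
    · intro h
      have hsub : seg a b ⊆ seg a c := by
        rw [← h]; exact Set.subset_union_left
      exact hT a b c hsub
end

section
/- Let V be a set and (u,v) ↦ [uv] a mapping from V² to subsets of V satisfying Sholander's axioms (S), (T), (U₁). Then for all a,b,x,y ∈ V with x,y ∈ [ab], either (x ∈ [ay] and y ∈ [xb]) or (y ∈ [ax] and x ∈ [yb]). -/
theorem stmt_8 {V : Type*} (seg : V → V → Set V)
    (hS : ∀ a b c, ∃ d, seg a b ∩ seg b c = seg b d)
    (hT : ∀ a b c, seg a b ⊆ seg a c → seg a b ∩ seg b c = {b})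
    (hU₁ : ∀ a b c, seg a b ∩ seg b c = {b} → seg a b ∪ seg b c = seg a c) :
    ∀ a b x y, x ∈ seg a b → y ∈ seg a b →
      (x ∈ seg a y ∧ y ∈ seg x b) ∨ (y ∈ seg a x ∧ x ∈ seg y b) := by
  -- [bb] = {b}
  have hbb : ∀ b, seg b b = {b} := by
    intro b
    have h := hT b b b (subset_refl _)
    rwa [Set.inter_self] at h
  -- b ∈ [ab]
  have hend2 : ∀ a b, b ∈ seg a b := by
    intro a b
    have h := hT a b b (subset_refl _)
    have hb : b ∈ seg a b ∩ seg b b := by rw [h]; rfl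
    exact hb.1
  -- a ∈ [ab]
  have hend1 : ∀ a b, a ∈ seg a b := by
    intro a b
    obtain ⟨d, hd⟩ := hS a a b
    have hd' : d ∈ seg a a ∩ seg a b := by rw [hd]; exact hend2 a d
    have hda : d = a := by
      have := hd'.1
      rw [hbb] at this
      exact this
    rw [hda] at hd
    have : seg a a ∩ seg a b = seg a a := hd
    have hsub : seg a a ⊆ seg a b := by
      intro z hz
      have : z ∈ seg a a ∩ seg a b := by rw [this]; exact hz
      exact this.2
    exact hsub (by rw [hbb]; rfl)
  -- symmetry
  have hsymm : ∀ a b, seg a b = seg b a := by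
    have key : ∀ a b, seg b a ⊆ seg a b := by
      intro a b
      obtain ⟨d, hd⟩ := hS a b a
      have hsub : seg b d ⊆ seg b a := by rw [← hd]; exact Set.inter_subset_right
      have h1 := hT b d a hsub
      have h2 := hU₁ b d a h1
      have ha : a ∈ seg b d := by rw [← hd]; exact ⟨hend1 a b, hend2 b a⟩
      have had : a ∈ seg d a := hend2 d a
      have hda : a = d := by
        have : a ∈ ({d} : Set V) := by rw [← h1]; exact ⟨ha, had⟩
        exact this
      subst hda
      rw [← hd]
      exact Set.inter_subset_left
    exact fun a b => Set.Subset.antisymm (key b a) (key a b)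
  -- monotonicity: c ∈ [ab] → [ac] ⊆ [ab]
  have hmono : ∀ a b c, c ∈ seg a b → seg a c ⊆ seg a b := by
    intro a b c hc
    obtain ⟨d, hd⟩ := hS c a b
    have hsub : seg a d ⊆ seg a c := by
      rw [← hd, hsymm a c]
      exact Set.inter_subset_left
    have h1 := hT a d c hsub
    have hcd : c ∈ seg a d := by rw [← hd]; exact ⟨hend1 c a, hc⟩
    have hdc : c = d := by
      have : c ∈ ({d} : Set V) := by rw [← h1]; exact ⟨hcd, hend2 d c⟩
      exact this
    subst hdc
    rw [← hd]
    exact Set.inter_subset_right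
  -- splitting: c ∈ [ab] → [ac] ∪ [cb] = [ab]
  have hsplit : ∀ a b c, c ∈ seg a b → seg a c ∪ seg c b = seg a b := by
    intro a b c hc
    exact hU₁ a c b (hT a c b (hmono a b c hc))
  -- main argument
  intro a b x y hx hy
  have hy' : y ∈ seg a x ∪ seg x b := by rw [hsplit a b x hx]; exact hy
  have hx' : x ∈ seg a y ∪ seg y b := by rw [hsplit a b y hy]; exact hx
  rcases hy' with hyax | hyxb
  · rcases hx' with hxay | hxyb
    · -- x ∈ [ay], y ∈ [ax] ⇒ x = y
      have e1 : seg a x ⊆ seg a y := hmono a y x hxay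
      have h1 := hT a x y e1
      have hyx : y = x := by
        have : y ∈ ({x} : Set V) := by rw [← h1]; exact ⟨hyax, hend2 x y⟩
        exact this
      subst hyx
      exact Or.inl ⟨hend2 a y, hend1 y b⟩
    · exact Or.inr ⟨hyax, hxyb⟩
  · rcases hx' with hxay | hxyb
    · exact Or.inl ⟨hxay, hyxb⟩
    · -- y ∈ [xb], x ∈ [yb] ⇒ x = y
      have hybx : y ∈ seg b x := by rw [← hsymm x b]; exact hyxb
      have hxby : x ∈ seg b y := by rw [← hsymm y b]; exact hxyb
      have e1 : seg b x ⊆ seg b y := hmono b y x hxby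
      have h1 := hT b x y e1
      have hyx : y = x := by
        have : y ∈ ({x} : Set V) := by rw [← h1]; exact ⟨hybx, hend2 x y⟩
        exact this
      subst hyx
      exact Or.inl ⟨hend2 a y, hend1 y b⟩
end

section
/- Let B be a strict ternary relation on a set V satisfying (S₁)–(S₄). Then (S₈) holds: for all u,v,w,z ∈ V, if (u,v,z) ∈ B and (u,w,z) ∈ B, then v = w or (u,v,w) ∈ B or (u,w,v) ∈ B. -/
/-- `N B u v w`: `u,v,w` are pairwise distinct and none of `(u,v,w)`,`(v,w,u)`,`(w,u,v)`
is in the ternary relation `B`. -/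
def TernN {V : Type*} (B : V → V → V → Prop) (u v w : V) : Prop :=
  u ≠ v ∧ v ≠ w ∧ u ≠ w ∧ ¬ B u v w ∧ ¬ B v w u ∧ ¬ B w u v

theorem stmt_12 {V : Type*} (B : V → V → V → Prop)
    (hstrict : ∀ x y z, B x y z → x ≠ y ∧ y ≠ z ∧ x ≠ z)
    (hS₁ : ∀ u v w, B u v w → B w v u)
    (hS₂ : ∀ u v w z, B u v w → B v w z → B u w z)
    (hS₃ : ∀ u v w z, B u v w → B u w z → B v w z)
    (hS₄ : ∀ u v w, TernN B u v w → ∃ c, B u c v ∧ B u c w) :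
    ∀ u v w z, B u v z → B u w z → v = w ∨ B u v w ∨ B u w v := by
  intro u v w z hvz hwz
  by_contra hcon
  push_neg at hcon
  obtain ⟨hvw, h1, h2⟩ := hcon
  -- key: from B w v z derive B u w v, contradiction
  have key : ¬ B w v z := by
    intro hwvz
    have hzvw : B z v w := hS₁ _ _ _ hwvz
    have hzwu : B z w u := hS₁ _ _ _ hwz
    exact h2 (hS₁ _ _ _ (hS₃ _ _ _ _ hzvw hzwu))
  by_cases hvuw : B v u w
  · -- B v u w leads to B z v z
    have hvwz : B v w z := hS₂ _ _ _ _ hvuw hwz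
    have hwvz : B w v z := hS₂ _ _ _ _ (hS₁ _ _ _ hvuw) hvz
    exact key hwvz
  · have hN : TernN B v u w := by
      refine ⟨(hstrict _ _ _ hvz).1.symm, (hstrict _ _ _ hwz).1, hvw, hvuw, h2, ?_⟩
      intro h; exact h1 (hS₁ _ _ _ h)
    obtain ⟨c, hvcu, hvcw⟩ := hS₄ _ _ _ hN
    have hucv : B u c v := hS₁ _ _ _ hvcu
    have hcvz : B c v z := hS₃ _ _ _ _ hucv hvz
    have hwcv : B w c v := hS₁ _ _ _ hvcw
    have hwvz : B w v z := hS₂ _ _ _ _ hwcv hcvz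
    exact key hwvz
end

section
/- Let B be a strict ternary relation on a set V satisfying (S₁)–(S₄). Then (S₉) holds: for all u,v,w,z ∈ V, if (u,v,z) ∈ B and (u,w,z) ∈ B, then v = w or (w,v,u) ∈ B or (w,v,z) ∈ B. -/
theorem stmt_13 {V : Type*} (B : V → V → V → Prop)
    (hstrict : ∀ x y z, B x y z → x ≠ y ∧ y ≠ z ∧ x ≠ z)
    (hS₁ : ∀ u v w, B u v w → B w v u)
    (hS₂ : ∀ u v w z, B u v w → B v w z → B u w z)
    (hS₃ : ∀ u v w z, B u v w → B u w z → B v w z)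
    (hS₄ : ∀ u v w, TernN B u v w → ∃ c, B u c v ∧ B u c w) :
    ∀ u v w z, B u v z → B u w z → v = w ∨ B w v u ∨ B w v z := by
  intro u v w z hv hw
  by_contra h
  push_neg at h
  obtain ⟨hvw, nWVU, nWVZ⟩ := h
  obtain ⟨huv, hvz, huz⟩ := hstrict u v z hv
  obtain ⟨huw, hwz, _⟩ := hstrict u w z hw
  have nUVW : ¬ B u v w := fun h => nWVU (hS₁ _ _ _ h)
  have nUWV : ¬ B u w v := fun h => nWVZ (hS₃ u w v z h hv)
  have nVUW : ¬ B v u w := fun h => nWVZ (hS₂ w u v z (hS₁ _ _ _ h) hv)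
  obtain ⟨c, hcv, hcw⟩ := hS₄ u v w
    ⟨huv, hvw, huw, nUVW, fun h => nUWV (hS₁ _ _ _ h), fun h => nVUW (hS₁ _ _ _ h)⟩
  have hczv : B c v z := hS₃ u c v z hcv hv
  have nVWZ : ¬ B v w z := fun h => nWVU (hS₃ z w v u (hS₁ _ _ _ h) (hS₁ _ _ _ hv))
  have nVZW : ¬ B v z w := fun h =>
    nUVW (hS₂ u c v w hcv (hS₁ _ _ _ (hS₂ w z v c (hS₁ _ _ _ h) (hS₁ _ _ _ hczv))))
  obtain ⟨e, hew, hez⟩ := hS₄ v w z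
    ⟨hvw, hwz, hvz, nVWZ, fun h => nVZW (hS₁ _ _ _ h), fun h => nWVZ (hS₁ _ _ _ h)⟩
  have h1 : B e v u := hS₃ z e v u (hS₁ _ _ _ hez) (hS₁ _ _ _ hv)
  have h2 : B u e w := hS₂ u v e w (hS₁ _ _ _ h1) hew
  have h3 : B e w z := hS₃ u e w z h2 hw
  exact nVWZ (hS₂ v e w z hew h3)
end

section
/- Let V be a finite set and B a strict ternary relation on V satisfying (S₁)–(S₄). Then (S₁₀) holds: for all r,u,x,y,z ∈ V, if (r,u,x) ∈ B, (r,u,z) ∈ B and (x,y,z) ∈ B, then y = u or (r,u,y) ∈ B. -/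
theorem stmt_14 {V : Type*} [Fintype V] (B : V → V → V → Prop)
    (hstrict : ∀ x y z, B x y z → x ≠ y ∧ y ≠ z ∧ x ≠ z)
    (hS₁ : ∀ u v w, B u v w → B w v u)
    (hS₂ : ∀ u v w z, B u v w → B v w z → B u w z)
    (hS₃ : ∀ u v w z, B u v w → B u w z → B v w z)
    (hS₄ : ∀ u v w, TernN B u v w → ∃ c, B u c v ∧ B u c w) :
    ∀ r u x y z, B r u x → B r u z → B x y z → y = u ∨ B r u y := by
  intro r u x y z hrux hruz hxyz
  by_cases hyu : y = u
  · exact Or.inl hyu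
  right
  have hxur : B x u r := hS₁ _ _ _ hrux
  have hzur : B z u r := hS₁ _ _ _ hruz
  have hzyx : B z y x := hS₁ _ _ _ hxyz
  suffices h : B y u r from hS₁ _ _ _ h
  by_cases h1 : B x y u
  · exact hS₃ _ _ _ _ h1 hxur
  by_cases h2 : B y u x
  · have hxuy : B x u y := hS₁ _ _ _ h2
    have huyz : B u y z := hS₃ _ _ _ _ hxuy hxyz
    exact hS₃ _ _ _ _ (hS₁ _ _ _ huyz) hzur
  by_cases h3 : B u x y
  · exact hS₂ _ _ _ _ (hS₁ _ _ _ h3) hxur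
  by_cases g1 : B z y u
  · exact hS₃ _ _ _ _ g1 hzur
  by_cases g2 : B y u z
  · exfalso
    have hzuy : B z u y := hS₁ _ _ _ g2
    exact h1 (hS₁ _ _ _ (hS₃ _ _ _ _ hzuy hzyx))
  by_cases g3 : B u z y
  · exact hS₂ _ _ _ _ (hS₁ _ _ _ g3) hzur
  exfalso
  obtain ⟨hxy, hyz2, hxz⟩ := hstrict _ _ _ hxyz
  obtain ⟨hru, hux, hrx⟩ := hstrict _ _ _ hrux
  obtain ⟨_, huz, hrz⟩ := hstrict _ _ _ hruz
  obtain ⟨c, hycu, hycx⟩ := hS₄ y u x ⟨hyu, hux, fun e => hxy e.symm, h2, h3, h1⟩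
  obtain ⟨c', hyc'u, hyc'z⟩ := hS₄ y u z ⟨hyu, huz, hyz2, g2, g3, g1⟩
  have hxcy : B x c y := hS₁ _ _ _ hycx
  have hcyz : B c y z := hS₃ _ _ _ _ hxcy hxyz
  have hzc'y : B z c' y := hS₁ _ _ _ hyc'z
  have hzyc : B z y c := hS₁ _ _ _ hcyz
  have hc'yc : B c' y c := hS₃ _ _ _ _ hzc'y hzyc
  have huyc' : B u y c' := hS₂ _ _ _ _ (hS₁ _ _ _ hycu) (hS₁ _ _ _ hc'yc)
  have : B u c' u := hS₂ _ _ _ _ huyc' hyc'u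
  exact (hstrict _ _ _ this).2.2 rfl
end
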